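/- Let W be a complex vector space, c a complex number, (u_k)_{k∈ℤ} a family of linear operators on W, and (H_m)_{m≥1} a family of pairwise commuting linear operators on W such that H_m u_k − u_k H_m = c·u_{k−m} for all m ≥ 1 and k ∈ ℤ. For t ∈ {+1, −1} define the formal operator series E(t, z) = exp(−t·Σ_{m≥1} (H_m/m) z^{m}); each coefficient of a power of z in E(t,z) is a finite linear combination of finite products of the operators H_m, hence a well-defined operator on W, and E(t,z) has only nonnegative powers of z. Set Y(u, z1) = Σ_{k∈ℤ} u_k z1^{−k−1}. Then for every w ∈ W the following identity of formal series in z1 and z2 holds: E(+1, z2)·Y(u, z1)·E(−1, z2)·w = Σ_{i∈ℕ} binom(c, i)(−1)^i z2^{i} z1^{−i}·Y(u, z1)·w; that is, conjugation of the field Y(u, z1) by E(+1, z2) multiplies it by the expansion of (1 − z2/z1)^{c} in nonnegative integer powers of z2. -/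

import Mathlib

/-!
Write `Φ_k(z) = E(1, z) u_k E(-1, z)` and `H(z) = ∑_{m ≥ 1} H_m z^m`. The exponential satisfies
`z ∂_z E(t, z) = -t H(z) E(t, z)` with `H(z)` commuting with `E(t, z)`, and the commutation
relations say `u_k H(z) = H(z) u_k - c ∑_{m ≥ 1} u_{k-m} z^m`. Hence
`z ∂_z Φ_k = -c ∑_{m ≥ 1} z^m Φ_{k-m}`, a recursion determining all coefficients of all `Φ_k`
from `Φ_k(0) = u_k`. The claimed coefficients `(-1)^j binom(c, j) u_{k-j}` satisfy the same
recursion, because `j (-1)^j binom(c, j) = -c ∑_{i<j} (-1)^i binom(c, i)`.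
-/

/-- The generalized binomial coefficient `binom(c, i) = c(c−1)⋯(c−i+1)/i!` for `c : ℂ`, `i : ℕ`. -/
noncomputable def cchoose (c : ℂ) (i : ℕ) : ℂ :=
  (∏ j ∈ Finset.range i, (c - (j : ℂ))) / (i.factorial : ℂ)

/-- The coefficient of `z^j` in the formal operator series
`E(t, z) = exp(−t·Σ_{m≥1} (H_m/m) z^m)`, computed via the power-series expansion of the
exponential: the coefficient of `z^j` in `Σ_{r≥0} X^r / r!` where
`X = −t·Σ_{m≥1} (H_m/m) z^m`.  Since `X` has zero constant term, only `r ≤ j`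
contributes, so each coefficient is a finite sum of finite products of the `H_m`. -/
noncomputable def expCoeff {W : Type} [AddCommGroup W] [Module ℂ W]
    (H : ℕ → Module.End ℂ W) (t : ℂ) (j : ℕ) : Module.End ℂ W :=
  ∑ r ∈ Finset.range (j + 1),
    (r.factorial : ℂ)⁻¹ •
      (PowerSeries.coeff (R := Module.End ℂ W) j
        ((PowerSeries.mk fun m => if m = 0 then 0 else (-t / (m : ℂ)) • H m) ^ r))

open Finset PowerSeries
open scoped Nat

theorem Finset.Nat.sum_antidiagonal_sum_antidiagonal_fst {M : Type*} [AddCommMonoid M] (n : ℕ)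
    (g : ℕ → ℕ → ℕ → M) :
    ∑ p ∈ antidiagonal n, ∑ q ∈ antidiagonal p.1, g q.1 q.2 p.2 =
      ∑ p ∈ antidiagonal n, ∑ q ∈ antidiagonal p.2, g q.1 p.1 q.2 := by
  rw [sum_sigma', sum_sigma']
  refine sum_nbij' (fun x => ⟨(x.2.2, x.2.1 + x.1.2), (x.2.1, x.1.2)⟩)
    (fun x => ⟨(x.2.1 + x.1.1, x.2.2), (x.2.1, x.1.1)⟩) ?_ ?_ ?_ ?_ ?_ <;>
  rintro ⟨⟨a, b⟩, ⟨c, d⟩⟩ hx <;>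
  simp only [mem_sigma, HasAntidiagonal.mem_antidiagonal] at hx ⊢
  · exact ⟨by omega, trivial⟩
  · exact ⟨by omega, trivial⟩
  · obtain ⟨-, rfl⟩ := hx; rfl
  · obtain ⟨-, rfl⟩ := hx; rfl

namespace PowerSeries

section Semiring

variable {R : Type*} [Semiring R]

theorem commute_of_coeff_commute {A B : R⟦X⟧} (h : ∀ a b, Commute (coeff a A) (coeff b B)) :
    Commute A B := by
  ext n
  rw [coeff_mul, coeff_mul, ← Nat.sum_antidiagonal_swap]
  exact sum_congr rfl fun p _ => (h p.2 p.1).eq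

theorem coeff_mul_C_mul (A B : R⟦X⟧) (x : R) (n : ℕ) :
    coeff n (A * C x * B) = ∑ p ∈ antidiagonal n, coeff p.1 A * x * coeff p.2 B := by
  rw [coeff_mul]
  simp only [coeff_mul_C]

theorem coeff_mul_mul_eq_sum (A G B : R⟦X⟧) (n : ℕ) :
    coeff n (A * G * B) = ∑ p ∈ antidiagonal n, coeff p.2 (A * C (coeff p.1 G) * B) := by
  simp only [coeff_mul_C_mul]
  rw [coeff_mul]
  simp only [coeff_mul, sum_mul]
  exact Nat.sum_antidiagonal_sum_antidiagonal_fst n fun a m d => coeff a A * coeff m G * coeff d B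

noncomputable def tailSeries (f : ℕ → R) : R⟦X⟧ := mk fun m => if m = 0 then 0 else f m

@[simp]
theorem coeff_zero_tailSeries (f : ℕ → R) : coeff 0 (tailSeries f) = 0 := by
  simp [tailSeries]

@[simp]
theorem coeff_succ_tailSeries (f : ℕ → R) (m : ℕ) : coeff (m + 1) (tailSeries f) = f (m + 1) := by
  simp [tailSeries]

theorem commute_tailSeries {f g : ℕ → R} (hfg : ∀ m n, 1 ≤ m → 1 ≤ n → Commute (f m) (g n)) :
    Commute (tailSeries f) (tailSeries g) := by
  refine commute_of_coeff_commute fun m n => ?_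
  rcases m with _ | m
  · simp
  rcases n with _ | n
  · simp
  simpa using hfg (m + 1) (n + 1) (by omega) (by omega)

noncomputable def eulerDeriv (A : R⟦X⟧) : R⟦X⟧ := mk fun n => n • coeff n A

@[simp]
theorem coeff_eulerDeriv (A : R⟦X⟧) (n : ℕ) : coeff n (eulerDeriv A) = n • coeff n A :=
  coeff_mk _ _

@[simp]
theorem eulerDeriv_C (a : R) : eulerDeriv (C a) = 0 := by
  ext n
  rcases n with _ | n <;> simp [coeff_C]

theorem eulerDeriv_mul (A B : R⟦X⟧) :
    eulerDeriv (A * B) = eulerDeriv A * B + A * eulerDeriv B := by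
  ext n
  simp only [coeff_eulerDeriv, map_add, coeff_mul, smul_sum, ← sum_add_distrib]
  refine sum_congr rfl fun p hp => ?_
  rw [← HasAntidiagonal.mem_antidiagonal.mp hp, add_smul, smul_mul_assoc, mul_smul_comm]

theorem eulerDeriv_pow_succ {A : R⟦X⟧} (hA : Commute A (eulerDeriv A)) (r : ℕ) :
    eulerDeriv (A ^ (r + 1)) = (r + 1) • (eulerDeriv A * A ^ r) := by
  induction r with
  | zero => simp
  | succ r ih =>
    rw [pow_succ, eulerDeriv_mul, ih, smul_mul_assoc, mul_assoc, ← pow_succ,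
      ((hA.pow_left (r + 1)).eq), succ_nsmul _ (r + 1)]

end Semiring

section ExpSeries

variable (K : Type*) {R : Type*} [Field K] [Ring R] [Algebra K R]

/-- This is `∑ r, N ^ r / r!` when `constantCoeff N = 0`, since then `N ^ r` contributes nothing
to the coefficients below `z ^ r`; otherwise the truncation makes it a junk value. -/
noncomputable def expSeries (N : R⟦X⟧) : R⟦X⟧ :=
  mk fun j => ∑ r ∈ range (j + 1), (r ! : K)⁻¹ • coeff j (N ^ r)

variable {K} {N : R⟦X⟧}

theorem coeff_expSeries_of_le (hN : constantCoeff N = 0) {j M : ℕ} (hjM : j ≤ M) :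
    coeff j (expSeries K N) = ∑ r ∈ range (M + 1), (r ! : K)⁻¹ • coeff j (N ^ r) := by
  refine (coeff_mk _ _).trans (sum_subset (range_subset_range.mpr (by omega)) fun r _ hr => ?_)
  have hjr : (j : ℕ∞) < (N ^ r).order :=
    (Nat.cast_lt.mpr (by simpa using hr)).trans_le (le_order_pow_of_constantCoeff_eq_zero r hN)
  rw [coeff_of_lt_order j hjr, smul_zero]

theorem coeff_mul_expSeries (hN : constantCoeff N = 0) (A : R⟦X⟧) (j : ℕ) :
    coeff j (A * expSeries K N) = ∑ r ∈ range (j + 1), (r ! : K)⁻¹ • coeff j (A * N ^ r) := by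
  simp only [coeff_mul, smul_sum]
  rw [sum_comm]
  refine sum_congr rfl fun p hp => ?_
  rw [coeff_expSeries_of_le hN (HasAntidiagonal.antidiagonal.snd_le hp), mul_sum]
  simp only [mul_smul_comm]

theorem coeff_expSeries_mul (hN : constantCoeff N = 0) (A : R⟦X⟧) (j : ℕ) :
    coeff j (expSeries K N * A) = ∑ r ∈ range (j + 1), (r ! : K)⁻¹ • coeff j (N ^ r * A) := by
  simp only [coeff_mul, smul_sum]
  rw [sum_comm]
  refine sum_congr rfl fun p hp => ?_
  rw [coeff_expSeries_of_le hN (HasAntidiagonal.antidiagonal.fst_le hp), sum_mul]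
  simp only [smul_mul_assoc]

theorem commute_expSeries (hN : constantCoeff N = 0) {A : R⟦X⟧} (hA : Commute A N) :
    Commute A (expSeries K N) := by
  ext j
  rw [coeff_mul_expSeries hN, coeff_expSeries_mul hN]
  simp only [(hA.pow_right _).eq]

theorem eulerDeriv_expSeries [CharZero K] (hN : constantCoeff N = 0)
    (hN' : Commute N (eulerDeriv N)) :
    eulerDeriv (expSeries K N) = eulerDeriv N * expSeries K N := by
  ext j
  rw [coeff_mul_expSeries hN, coeff_eulerDeriv, coeff_expSeries_of_le hN (Nat.le_succ j),
    smul_sum, sum_range_succ']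
  simp only [smul_comm j, ← coeff_eulerDeriv, eulerDeriv_pow_succ hN']
  rw [pow_zero, ← map_one C, eulerDeriv_C, map_zero, smul_zero, add_zero]
  refine sum_congr rfl fun r _ => ?_
  rw [map_nsmul, ← Nat.cast_smul_eq_nsmul K, smul_smul, Nat.factorial_succ]
  congr 1
  push_cast
  field_simp

end ExpSeries

section VertexOperator

variable {K R : Type*} [Field K] [Ring R] [Algebra K R] {h : ℕ → R}

variable (K) in
/-- `E(t, z) = exp (-t ∑_{m ≥ 1} h_m z^m / m)`. -/
noncomputable def vertexExp (h : ℕ → R) (t : K) : R⟦X⟧ :=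
  expSeries K (tailSeries fun m => (-t / (m : K)) • h m)

theorem eulerDeriv_tailSeries_div_smul [CharZero K] (t : K) :
    eulerDeriv (tailSeries fun m => (-t / (m : K)) • h m) = (-t) • tailSeries h := by
  ext m
  simp only [coeff_eulerDeriv, coeff_smul, tailSeries, coeff_mk]
  split_ifs with hm
  · simp
  · rw [← Nat.cast_smul_eq_nsmul K, smul_smul, mul_div_cancel₀ _ (Nat.cast_ne_zero.mpr hm)]

theorem C_mul_tailSeries {c : K} {u : ℤ → R} {k : ℤ}
    (hrel : ∀ m : ℕ, 1 ≤ m → h m * u k - u k * h m = c • u (k - m)) :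
    C (u k) * tailSeries h = tailSeries h * C (u k) - c • tailSeries fun m => u (k - m) := by
  ext m
  simp only [map_sub, coeff_C_mul, coeff_mul_C, coeff_smul, tailSeries, coeff_mk]
  split_ifs with hm
  · simp
  · rw [← hrel m (by omega)]
    abel

variable (hh : ∀ m n, 1 ≤ m → 1 ≤ n → Commute (h m) (h n))
include hh

theorem commute_tailSeries_vertexExp (t : K) : Commute (tailSeries h) (vertexExp K h t) :=
  commute_expSeries (by simp [tailSeries])
    (commute_tailSeries fun m n hm hn => (hh m n hm hn).smul_right _)

theorem eulerDeriv_vertexExp [CharZero K] (t : K) :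
    eulerDeriv (vertexExp K h t) = (-t) • tailSeries h * vertexExp K h t := by
  have hN : Commute (tailSeries fun m => (-t / (m : K)) • h m)
      (eulerDeriv (tailSeries fun m => (-t / (m : K)) • h m)) := by
    rw [eulerDeriv_tailSeries_div_smul]
    exact (commute_tailSeries fun m n hm hn => (hh m n hm hn).smul_left _).smul_right _
  rw [vertexExp, eulerDeriv_expSeries (by simp [tailSeries]) hN, eulerDeriv_tailSeries_div_smul]

theorem eulerDeriv_vertexExp_conj [CharZero K] {c : K} {u : ℤ → R} {k : ℤ}
    (hrel : ∀ m : ℕ, 1 ≤ m → h m * u k - u k * h m = c • u (k - m)) :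
    eulerDeriv (vertexExp K h 1 * C (u k) * vertexExp K h (-1)) =
      -c • (vertexExp K h 1 * tailSeries (fun m => u (k - m)) * vertexExp K h (-1)) := by
  have hmid : ∀ A B : R⟦X⟧, vertexExp K h 1 * C (u k) * (A * B) =
      vertexExp K h 1 * (C (u k) * A) * B := by
    intros; simp only [mul_assoc]
  rw [eulerDeriv_mul, eulerDeriv_mul, eulerDeriv_C, mul_zero, add_zero,
    eulerDeriv_vertexExp hh, eulerDeriv_vertexExp hh, neg_neg, one_smul, neg_one_smul, hmid,
    C_mul_tailSeries hrel, neg_mul, (commute_tailSeries_vertexExp hh 1).eq]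
  simp only [mul_sub, sub_mul, neg_mul, mul_smul_comm, smul_mul_assoc, mul_assoc, neg_smul]
  abel

theorem succ_nsmul_coeff_succ_vertexExp_conj [CharZero K] {c : K} {u : ℤ → R}
    (hrel : ∀ m : ℕ, 1 ≤ m → ∀ k : ℤ, h m * u k - u k * h m = c • u (k - m)) (k : ℤ) (n : ℕ) :
    (n + 1) • coeff (n + 1) (vertexExp K h 1 * C (u k) * vertexExp K h (-1)) =
      -c • ∑ p ∈ antidiagonal n,
        coeff p.2 (vertexExp K h 1 * C (u (k - (p.1 + 1 : ℕ))) * vertexExp K h (-1)) := by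
  have hcoeff := congrArg (coeff (n + 1)) (eulerDeriv_vertexExp_conj hh fun m hm => hrel m hm k)
  rw [coeff_eulerDeriv, coeff_smul, coeff_mul_mul_eq_sum _ (tailSeries _),
    Nat.sum_antidiagonal_succ, coeff_zero_tailSeries, map_zero, mul_zero, zero_mul, map_zero,
    zero_add] at hcoeff
  simpa only [coeff_succ_tailSeries] using hcoeff

end VertexOperator

end PowerSeries

theorem cchoose_succ (c : ℂ) (n : ℕ) :
    (n + 1) * cchoose c (n + 1) = (c - n) * cchoose c n := by
  rw [cchoose, cchoose, prod_range_succ, Nat.factorial_succ]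
  push_cast
  field_simp

theorem neg_mul_sum_range_neg_one_pow_mul_cchoose (c : ℂ) (n : ℕ) :
    -c * ∑ l ∈ range (n + 1), (-1) ^ l * cchoose c l =
      (n + 1) * ((-1) ^ (n + 1) * cchoose c (n + 1)) := by
  induction n with
  | zero => simp [cchoose]
  | succ n ih =>
    rw [sum_range_succ, mul_add, ih]
    have h := cchoose_succ c (n + 1)
    push_cast at h ⊢
    linear_combination (-(-1 : ℂ) ^ (n + 2)) * h

theorem eq_cchoose_smul_of_recurrence {M : Type*} [AddCommGroup M] [Module ℂ M] {c : ℂ}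
    {a : ℤ → ℕ → M}
    (ha : ∀ k n, (n + 1) • a k (n + 1) = -c • ∑ p ∈ antidiagonal n, a (k - (p.1 + 1 : ℕ)) p.2)
    (k : ℤ) (n : ℕ) : a k n = ((-1) ^ n * cchoose c n) • a (k - n) 0 := by
  induction n using Nat.strong_induction_on generalizing k with
  | _ n ih =>
  rcases n with _ | n
  · simp [cchoose]
  have hsum : ∑ p ∈ antidiagonal n, a (k - (p.1 + 1 : ℕ)) p.2 =
      (∑ l ∈ range (n + 1), (-1) ^ l * cchoose c l) • a (k - (n + 1 : ℕ)) 0 := by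
    rw [sum_smul, ← Nat.sum_antidiagonal_swap, Nat.sum_antidiagonal_eq_sum_range_succ_mk]
    refine sum_congr rfl fun i hi => ?_
    have hi := mem_range.mp hi
    rw [Prod.snd_swap, Prod.fst_swap, ih i (by omega)]
    congr 2
    omega
  have hn : ((n + 1 : ℕ) : ℂ) ≠ 0 := Nat.cast_ne_zero.mpr n.succ_ne_zero
  refine smul_right_injective M hn ?_
  simp only [Nat.cast_smul_eq_nsmul, ha, hsum, smul_smul]
  rw [neg_mul_sum_range_neg_one_pow_mul_cchoose]
  push_cast
  rfl

theorem coeff_vertexExp {W : Type} [AddCommGroup W] [Module ℂ W] (H : ℕ → Module.End ℂ W)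
    (t : ℂ) (j : ℕ) :
    coeff j (vertexExp ℂ H t) = expCoeff H t j := by
  rw [vertexExp, expSeries, coeff_mk]
  rfl

theorem expCoeff_zero {W : Type} [AddCommGroup W] [Module ℂ W] (H : ℕ → Module.End ℂ W) (t : ℂ) :
    expCoeff H t 0 = 1 := by
  simp [expCoeff]

/-- Let `W` be a complex vector space, `c ∈ ℂ`, `(u_k)_{k∈ℤ}` operators on
`W`, and `(H_m)_{m≥1}` pairwise commuting operators with `[H_m, u_k] = c·u_{k−m}`.
With `E(t,z) = exp(−t·Σ_{m≥1} (H_m/m) z^m)` and `Y(u,z1) = Σ_{k∈ℤ} u_k z1^{−k−1}`, for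
every `w ∈ W` the identity of formal series
`E(+1,z2)·Y(u,z1)·E(−1,z2)·w = Σ_{i∈ℕ} binom(c,i)(−1)^i z2^i z1^{−i}·Y(u,z1)·w`
holds; coefficientwise (at `z1^{−k−1} z2^{j}`):
`Σ_{j1+j2=j} E(+1)_{j1}(u_k(E(−1)_{j2} w)) = (−1)^j binom(c,j)·u_{k−j} w`. -/
theorem conjugation_formula
    (W : Type) [AddCommGroup W] [Module ℂ W] (c : ℂ)
    (u : ℤ → Module.End ℂ W) (H : ℕ → Module.End ℂ W)
    (hcomm : ∀ m n : ℕ, 1 ≤ m → 1 ≤ n → H m * H n = H n * H m)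
    (hrel : ∀ m : ℕ, 1 ≤ m → ∀ k : ℤ, H m * u k - u k * H m = c • u (k - m)) :
    ∀ (k : ℤ) (j : ℕ) (w : W),
      (∑ pq ∈ Finset.HasAntidiagonal.antidiagonal j,
          expCoeff H 1 pq.1 (u k (expCoeff H (-1) pq.2 w)))
        = ((-1 : ℂ) ^ j * cchoose c j) • u (k - j) w := by
  intro k j w
  have key := eq_cchoose_smul_of_recurrence
    (a := fun k n => coeff n (vertexExp ℂ H 1 * C (u k) * vertexExp ℂ H (-1)))
    (succ_nsmul_coeff_succ_vertexExp_conj hcomm hrel) k j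
  simp only [coeff_mul_C_mul, coeff_vertexExp, Nat.antidiagonal_zero, sum_singleton,
    expCoeff_zero, one_mul, mul_one] at key
  simpa using congr($key w)
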